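/- arXiv:2401.00408 — 2 statements merged into one kernel-verified Lean document; each statement's English description precedes it below -/
import Mathlib

section
/- Kakie–Ho rank theorem: Let h = deg gcd(F₀,…,F_n), m = max d_i, ℓ = min d_i, and let N₀(F) be the generalized Sylvester matrix M_μ with μ_i = m + ℓ − d_i. Then rank N₀(F) = m + ℓ − h. -/
open Polynomial

/-- Determinant polynomial of a `p × q` matrix (meaningful when `p ≤ q`):
`dp M = ∑_{0 ≤ j ≤ q-p} c_j x^j` where `c_j` is the determinant of the square
matrix formed from the first `p-1` columns of `M` together with column `q-j`
(1-indexed), i.e. column `q-1-j` (0-indexed). -/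
noncomputable def dpMat {R : Type*} [CommRing R] {p q : ℕ} (M : Matrix (Fin p) (Fin q) R) :
    Polynomial R :=
  if hq : q = 0 then 0 else
    ∑ j ∈ Finset.range (q - p + 1),
      Polynomial.C
        (Matrix.det (M.submatrix id fun k : Fin p =>
          (⟨min (if (k : ℕ) < p - 1 then (k : ℕ) else q - 1 - j) (q - 1),
            lt_of_le_of_lt (min_le_right _ _)
              (Nat.sub_lt (Nat.pos_of_ne_zero hq) one_pos)⟩ : Fin q))) *
        Polynomial.X ^ j

/-- Coefficient matrix of a list of polynomials, with `m + 1` columns: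
the `(i,j)` entry is the coefficient of `x^(m-j)` in the `i`-th polynomial. -/
noncomputable def cmList {R : Type*} [CommRing R] (L : List (Polynomial R)) (m : ℕ) :
    Matrix (Fin L.length) (Fin (m + 1)) R :=
  fun i j => (L.get i).coeff (m - (j : ℕ))

/-- Determinant polynomial of a list of polynomials. -/
noncomputable def dpList {R : Type*} [CommRing R] (L : List (Polynomial R)) (m : ℕ) :
    Polynomial R :=
  dpMat (cmList L m)

/-- The list `x^(t-1) * P, …, x^0 * P`. -/
noncomputable def shifts {R : Type*} [CommRing R] (P : Polynomial R) (t : ℕ) :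
    List (Polynomial R) :=
  ((List.range t).reverse).map fun j => Polynomial.X ^ j * P

/-- The `k`-subresultant (new indexing) of two polynomials of degrees `d0 ≤ d1`. -/
noncomputable def subres2 {R : Type*} [CommRing R] (F0 F1 : Polynomial R) (d0 d1 k : ℕ) :
    Polynomial R :=
  if k = 0 then Polynomial.C ((F0.coeff d0) ^ (d1 - d0 - 1)) * F0
  else dpList (shifts F0 (d1 - d0 + k) ++ shifts F1 k) (d1 + k - 1)

/-- Principal coefficient `r_k(F₀,F₁) = coeff_{x^(d₀-k)} R_k(F₀,F₁)`. -/
noncomputable def pcsubres2 {R : Type*} [CommRing R] (F0 F1 : Polynomial R) (d0 d1 k : ℕ) : R :=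
  (subres2 F0 F1 d0 d1 k).coeff (d0 - k)

/-- Rows `x^(μ_i - 1) F_i, …, x^0 F_i` stacked for `i = 0, …, n`. -/
noncomputable def rowsList {R : Type*} [CommRing R] {n : ℕ} (F : Fin (n + 1) → Polynomial R)
    (μ : Fin (n + 1) → ℕ) : List (Polynomial R) :=
  (List.finRange (n + 1)).flatMap fun i => shifts (F i) (μ i)

/-- Number of columns `max_{i : μ_i ≠ 0} (d_i + μ_i)` of the stacked coefficient matrix. -/
def numCols {n : ℕ} (d μ : Fin (n + 1) → ℕ) : ℕ :=
  Finset.univ.sup fun i => if μ i = 0 then 0 else d i + μ i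

/-- The generalized Sylvester matrix `M_μ(F)`. -/
noncomputable def genMat {R : Type*} [CommRing R] {n : ℕ} (d : Fin (n + 1) → ℕ)
    (F : Fin (n + 1) → Polynomial R) (μ : Fin (n + 1) → ℕ) :
    Matrix (Fin (rowsList F μ).length) (Fin (numCols d μ - 1 + 1)) R :=
  cmList (rowsList F μ) (numCols d μ - 1)

/-- The generalized subresultant `R̃_μ(F) = dp (M_μ(F))`. -/
noncomputable def Rtilde {R : Type*} [CommRing R] {n : ℕ} (d : Fin (n + 1) → ℕ)
    (F : Fin (n + 1) → Polynomial R) (μ : Fin (n + 1) → ℕ) : Polynomial R :=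
  dpMat (genMat d F μ)

/-- Principal coefficient of `R̃_μ(F)`. -/
noncomputable def rtilde {R : Type*} [CommRing R] {n : ℕ} (d : Fin (n + 1) → ℕ)
    (F : Fin (n + 1) → Polynomial R) (μ : Fin (n + 1) → ℕ) : R :=
  (Rtilde d F μ).coeff (numCols d μ - ∑ i, μ i)

/-- `c(δ)`: number of columns of the coefficient matrix of the blocks for `F₁,…,F_n`. -/
def cdelta {n : ℕ} (d : Fin (n + 1) → ℕ) (δ : Fin n → ℕ) : ℕ :=
  Finset.univ.sup fun i : Fin n => if δ i = 0 then 0 else d i.succ + δ i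

/-- `δ₀ = c(δ) - d₀` if `c(δ) ≥ d₀`, else `1`. -/
def delta0 {n : ℕ} (d : Fin (n + 1) → ℕ) (δ : Fin n → ℕ) : ℕ :=
  if d 0 ≤ cdelta d δ then cdelta d δ - d 0 else 1

/-- The `δ`-subresultant `R_δ(F)` of `F = (F₀,…,F_n)`. -/
noncomputable def Rsub {R : Type*} [CommRing R] {n : ℕ} (d : Fin (n + 1) → ℕ)
    (F : Fin (n + 1) → Polynomial R) (δ : Fin n → ℕ) : Polynomial R :=
  Rtilde d F (Fin.cons (delta0 d δ) δ)

/-- Principal coefficient `r_δ(F) = coeff_{x^(d₀ - |δ|)} R_δ(F)`. -/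
noncomputable def rsub {R : Type*} [CommRing R] {n : ℕ} (d : Fin (n + 1) → ℕ)
    (F : Fin (n + 1) → Polynomial R) (δ : Fin n → ℕ) : R :=
  (Rsub d F δ).coeff (d 0 - ∑ i, δ i)

/-- gcd in `K[X]` (Euclidean gcd). -/
noncomputable def pgcd {K : Type*} [Field K] (A B : Polynomial K) : Polynomial K :=
  @EuclideanDomain.gcd _ _ (Classical.decEq _) A B

/-- gcd of `F₀, …, F_i`. -/
noncomputable def gcdFam {K : Type*} [Field K] {n : ℕ} (F : Fin (n + 1) → Polynomial K)
    (i : Fin (n + 1)) : Polynomial K :=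
  (List.finRange (n + 1)).foldr (fun j acc => if j ≤ i then pgcd (F j) acc else acc) 0

/-- Graded lexicographic order: `δ ≻ γ`. -/
def glexGT {n : ℕ} (δ γ : Fin n → ℕ) : Prop :=
  (∑ i, γ i < ∑ i, δ i) ∨
    ((∑ i, δ i = ∑ i, γ i) ∧ ∃ i, γ i < δ i ∧ ∀ j, j < i → δ j = γ j)

section KakieAux
variable {K : Type*} [Field K]


/-- Multiples of `A` of degree `< N`, as a subspace of `K[X]`. -/
noncomputable def divLT (A : Polynomial K) (N : ℕ) : Submodule K (Polynomial K) where
  carrier := {P | A ∣ P ∧ P.degree < (N : ℕ)}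
  add_mem' := by
    rintro P Q ⟨h1, h2⟩ ⟨h3, h4⟩
    exact ⟨dvd_add h1 h3, lt_of_le_of_lt (degree_add_le _ _) (max_lt h2 h4)⟩
  zero_mem' := ⟨dvd_zero _, by simp [degree_zero]⟩
  smul_mem' := by
    rintro c P ⟨h1, h2⟩
    refine ⟨?_, lt_of_le_of_lt (degree_smul_le _ _) h2⟩
    rw [Polynomial.smul_eq_C_mul]
    exact h1.mul_left _

theorem mem_divLT {A P : Polynomial K} {N : ℕ} :
    P ∈ divLT A N ↔ A ∣ P ∧ P.degree < (N : ℕ) := Iff.rfl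

theorem divLT_le_degreeLT (A : Polynomial K) (N : ℕ) : divLT A N ≤ degreeLT K N :=
  fun _ h => mem_degreeLT.2 h.2

theorem divLT_mono {A B : Polynomial K} (h : B ∣ A) (N : ℕ) : divLT A N ≤ divLT B N :=
  fun _ hP => ⟨h.trans hP.1, hP.2⟩

theorem divLT_congr {A B : Polynomial K} (h : B ∣ A) (h' : A ∣ B) (N : ℕ) :
    divLT A N = divLT B N :=
  le_antisymm (divLT_mono h N) (divLT_mono h' N)

theorem pgcd_dvd_left (A B : K[X]) : pgcd A B ∣ A := by
  letI : DecidableEq K[X] := Classical.decEq _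
  exact EuclideanDomain.gcd_dvd_left A B

theorem pgcd_dvd_right (A B : K[X]) : pgcd A B ∣ B := by
  letI : DecidableEq K[X] := Classical.decEq _
  exact EuclideanDomain.gcd_dvd_right A B

theorem pgcd_eq_zero_iff {A B : K[X]} : pgcd A B = 0 ↔ A = 0 ∧ B = 0 := by
  letI : DecidableEq K[X] := Classical.decEq _
  exact EuclideanDomain.gcd_eq_zero_iff

theorem pgcd_bezout (A B : K[X]) : ∃ U V, pgcd A B = A * U + B * V := by
  letI : DecidableEq K[X] := Classical.decEq _
  exact ⟨_, _, EuclideanDomain.gcd_eq_gcd_ab A B⟩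

theorem divLT_sup_pgcd {A B : Polynomial K} (hA : A ≠ 0) (hB : B ≠ 0) {N : ℕ}
    (hcond : A.natDegree + B.natDegree ≤ N + (pgcd A B).natDegree) :
    divLT A N ⊔ divLT B N = divLT (pgcd A B) N := by
  have hD : pgcd A B ≠ 0 := fun h => hA (pgcd_eq_zero_iff.1 h).1
  apply le_antisymm
  · exact sup_le (divLT_mono (pgcd_dvd_left A B) N) (divLT_mono (pgcd_dvd_right A B) N)
  rintro P ⟨⟨Q, hPQ⟩, hdeg⟩
  obtain ⟨U₀, V₀, hbez⟩ := pgcd_bezout A B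
  obtain ⟨A1, hA1⟩ := pgcd_dvd_left A B
  obtain ⟨B1, hB1⟩ := pgcd_dvd_right A B
  have hB1ne : B1 ≠ 0 := fun h => hB (by rw [hB1, h, mul_zero])
  have hB2m : (B1 * C B1.leadingCoeff⁻¹).Monic := monic_mul_leadingCoeff_inv hB1ne
  have hmod : (U₀ * Q) %ₘ (B1 * C B1.leadingCoeff⁻¹) +
      (B1 * C B1.leadingCoeff⁻¹) * ((U₀ * Q) /ₘ (B1 * C B1.leadingCoeff⁻¹)) = U₀ * Q :=
    modByMonic_add_div _ _
  set U := (U₀ * Q) %ₘ (B1 * C B1.leadingCoeff⁻¹) with hUdef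
  set S := (U₀ * Q) /ₘ (B1 * C B1.leadingCoeff⁻¹) with hSdef
  have hdegU : U.degree < (B1 * C B1.leadingCoeff⁻¹).degree := degree_modByMonic_lt _ hB2m
  have key : A * U + B * (A1 * (C B1.leadingCoeff⁻¹ * S) + V₀ * Q) = P := by
    have hmod' : U + B1 * C B1.leadingCoeff⁻¹ * S = U₀ * Q := by
      rw [← hmod]
    linear_combination A * hmod' + (C B1.leadingCoeff⁻¹ * S * A1) * hB1 -
      (C B1.leadingCoeff⁻¹ * S * B1) * hA1 - Q * hbez - hPQ
  have hb1 : B.natDegree = (pgcd A B).natDegree + B1.natDegree := by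
    conv_lhs => rw [hB1]
    exact natDegree_mul hD hB1ne
  have hAU : (A * U).degree < (N : ℕ) := by
    by_cases hU : U = 0
    · rw [hU, mul_zero, degree_zero]; exact WithBot.bot_lt_coe N
    · have h1 : U.natDegree < B1.natDegree := by
        have := (degree_mul_leadingCoeff_inv B1 hB1ne)
        rw [this] at hdegU
        exact natDegree_lt_natDegree hU hdegU
      have h2 : (A * U).natDegree < N := by
        rw [natDegree_mul hA hU]; omega
      exact (natDegree_lt_iff_degree_lt (mul_ne_zero hA hU)).1 h2
  have hBV : (B * (A1 * (C B1.leadingCoeff⁻¹ * S) + V₀ * Q)).degree < (N : ℕ) := by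
    have heq : B * (A1 * (C B1.leadingCoeff⁻¹ * S) + V₀ * Q) = P - A * U := by
      rw [← key]; ring
    rw [heq]
    exact lt_of_le_of_lt (degree_sub_le _ _) (max_lt hdeg hAU)
  exact Submodule.mem_sup.2 ⟨A * U, ⟨dvd_mul_right A U, hAU⟩,
    B * (A1 * (C B1.leadingCoeff⁻¹ * S) + V₀ * Q), ⟨dvd_mul_right _ _, hBV⟩, key⟩

theorem degreeLT_finiteDimensional (N : ℕ) : FiniteDimensional K (degreeLT K N) :=
  Module.Finite.equiv (degreeLTEquiv K N).symm

theorem finrank_degreeLT (N : ℕ) : Module.finrank K (degreeLT K N) = N := by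
  rw [LinearEquiv.finrank_eq (degreeLTEquiv K N), Module.finrank_fin_fun]

theorem divLT_eq_map {A : Polynomial K} (hA : A ≠ 0) {N : ℕ} (h : A.natDegree ≤ N) :
    divLT A N = Submodule.map (LinearMap.mulLeft K A) (degreeLT K (N - A.natDegree)) := by
  ext P
  simp only [Submodule.mem_map, LinearMap.mulLeft_apply, mem_degreeLT, mem_divLT]
  constructor
  · rintro ⟨⟨Q, rfl⟩, hdeg⟩
    refine ⟨Q, ?_, rfl⟩
    by_cases hQ : Q = 0
    · rw [hQ, degree_zero]; exact WithBot.bot_lt_coe _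
    · have hAQ : A * Q ≠ 0 := mul_ne_zero hA hQ
      have h1 : (A * Q).natDegree < N := (natDegree_lt_iff_degree_lt hAQ).2 hdeg
      rw [natDegree_mul hA hQ] at h1
      exact (natDegree_lt_iff_degree_lt hQ).1 (by omega)
  · rintro ⟨Q, hdeg, rfl⟩
    refine ⟨dvd_mul_right A Q, ?_⟩
    by_cases hQ : Q = 0
    · rw [hQ, mul_zero, degree_zero]; exact WithBot.bot_lt_coe _
    · have h1 : Q.natDegree < N - A.natDegree := (natDegree_lt_iff_degree_lt hQ).2 hdeg
      refine (natDegree_lt_iff_degree_lt (mul_ne_zero hA hQ)).1 ?_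
      rw [natDegree_mul hA hQ]; omega

theorem finrank_divLT {A : Polynomial K} (hA : A ≠ 0) {N : ℕ} (h : A.natDegree ≤ N) :
    Module.finrank K (divLT A N) = N - A.natDegree := by
  have hinj : Function.Injective (LinearMap.mulLeft K A) := by
    intro x y hxy
    exact mul_left_cancel₀ hA hxy
  rw [divLT_eq_map hA h,
    ← LinearEquiv.finrank_eq (Submodule.equivMapOfInjective _ hinj (degreeLT K (N - A.natDegree))),
    finrank_degreeLT]

theorem span_shifts {P : Polynomial K} (hP : P ≠ 0) (t : ℕ) :
    Submodule.span K {x | x ∈ shifts P t} = divLT P (t + P.natDegree) := by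
  classical
  have hset : {x | x ∈ shifts P t} =
      (LinearMap.mulLeft K P) '' ((fun j : ℕ => (X : K[X]) ^ j) '' ↑(Finset.range t)) := by
    ext x
    constructor
    · intro hx
      rw [Set.mem_setOf_eq, shifts, List.mem_map] at hx
      obtain ⟨j, hj, rfl⟩ := hx
      rw [List.mem_reverse, List.mem_range] at hj
      exact ⟨X ^ j, ⟨j, by simpa using hj, rfl⟩, by simp [mul_comm]⟩
    · rintro ⟨y, ⟨j, hj, rfl⟩, rfl⟩
      rw [Set.mem_setOf_eq, shifts, List.mem_map]
      exact ⟨j, by simp only [List.mem_reverse, List.mem_range]; simpa using hj,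
        by simp [mul_comm]⟩
  rw [hset, Submodule.span_image, ← Finset.coe_image, ← degreeLT_eq_span_X_pow,
    divLT_eq_map hP (Nat.le_add_left _ _), Nat.add_sub_cancel]

theorem foldr_pgcd_ne_zero {A : Polynomial K} (hA : A ≠ 0) (s : List (Polynomial K)) :
    s.foldr pgcd A ≠ 0 := by
  induction s with
  | nil => exact hA
  | cons B s ih => exact fun h => ih (pgcd_eq_zero_iff.1 h).2

theorem foldr_pgcd_dvd_init (A : Polynomial K) (s : List (Polynomial K)) :
    s.foldr pgcd A ∣ A := by
  induction s with
  | nil => exact dvd_refl A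
  | cons B s ih => exact (pgcd_dvd_right _ _).trans ih

theorem foldr_pgcd_dvd_mem (A : Polynomial K) (s : List (Polynomial K)) :
    ∀ B ∈ s, s.foldr pgcd A ∣ B := by
  induction s with
  | nil => intro B h; exact absurd h List.not_mem_nil
  | cons C s ih =>
    intro B hB
    rcases List.mem_cons.1 hB with h | h
    · subst h; exact pgcd_dvd_left _ _
    · exact (pgcd_dvd_right _ _).trans (ih B h)

theorem dvd_foldr_pgcd {D A : Polynomial K} {s : List (Polynomial K)} (h : D ∣ A)
    (h2 : ∀ B ∈ s, D ∣ B) : D ∣ s.foldr pgcd A := by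
  induction s with
  | nil => exact h
  | cons B s ih =>
    letI : DecidableEq K[X] := Classical.decEq _
    exact EuclideanDomain.dvd_gcd (h2 B (List.mem_cons_self))
      (ih fun B hB => h2 B (List.mem_cons_of_mem _ hB))

theorem sup_divLT_fold {N ℓ' : ℕ} (s : List (Polynomial K)) (A : Polynomial K)
    (hA : A ≠ 0) (hAd : A.natDegree ≤ ℓ')
    (hs : ∀ B ∈ s, B ≠ 0 ∧ B.natDegree + ℓ' ≤ N) :
    divLT A N ⊔ s.foldr (fun B acc => divLT B N ⊔ acc) ⊥ = divLT (s.foldr pgcd A) N := by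
  induction s with
  | nil => simp
  | cons B s ih =>
    simp only [List.foldr_cons]
    have h1 := ih (fun B hB => hs B (List.mem_cons_of_mem _ hB))
    rw [← sup_assoc, sup_comm (divLT A N) (divLT B N), sup_assoc, h1]
    have hG : s.foldr pgcd A ≠ 0 := foldr_pgcd_ne_zero hA s
    have hB0 := (hs B (List.mem_cons_self)).1
    apply divLT_sup_pgcd hB0 hG
    have hd1 : (s.foldr pgcd A).natDegree ≤ ℓ' :=
      le_trans (natDegree_le_of_dvd (foldr_pgcd_dvd_init A s) hA) hAd
    have hd2 := (hs B (List.mem_cons_self)).2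
    omega

theorem span_flatMap {ι : Type*} (g : ι → List (Polynomial K)) (l : List ι) :
    Submodule.span K {x | x ∈ l.flatMap g} =
      l.foldr (fun i acc => Submodule.span K {x | x ∈ g i} ⊔ acc) ⊥ := by
  induction l with
  | nil => simp
  | cons i l ih =>
    have hs : {x | x ∈ (i :: l).flatMap g} = {x | x ∈ g i} ∪ {x | x ∈ l.flatMap g} := by
      ext x; simp
    rw [List.foldr_cons, hs, Submodule.span_union, ih]

end KakieAux

/-- Kakie–Ho rank theorem: with `h = deg gcd(F₀,…,F_n)`, `m = max dᵢ`,
`ℓ = min dᵢ`, and `N₀(F) = M_μ(F)` where `μ_i = m + ℓ - d_i`, one has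
`rank N₀(F) = m + ℓ - h`. -/
theorem kakie_ho_rank {K : Type*} [Field K] {n : ℕ} (d : Fin (n + 1) → ℕ)
    (F : Fin (n + 1) → Polynomial K) (hdeg : ∀ i, (F i).degree = (d i : ℕ))
    (hpos : ∀ i, 0 < d i) (m ℓ : ℕ)
    (hm : ∀ i, d i ≤ m) (hm' : ∃ i, d i = m) (hl : ∀ i, ℓ ≤ d i) (hl' : ∃ i, d i = ℓ) :
    (genMat d F fun i => m + ℓ - d i).rank =
      m + ℓ - (gcdFam F (Fin.last n)).natDegree := by
  classical
  set μ : Fin (n + 1) → ℕ := fun i => m + ℓ - d i with hμdef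
  have hF0 : ∀ i, F i ≠ 0 := fun i h => by simpa [h] using hdeg i
  have hnd : ∀ i, (F i).natDegree = d i := fun i => natDegree_eq_of_degree_eq_some (hdeg i)
  obtain ⟨im, him⟩ := hm'
  obtain ⟨iℓ, hiℓ⟩ := hl'
  have hl1 : 1 ≤ ℓ := by have := hpos iℓ; omega
  have hm1 : 1 ≤ m := by have := hpos im; omega
  have hcols : numCols d μ = m + ℓ := by
    have h1 : ∀ i ∈ Finset.univ, (if μ i = 0 then 0 else d i + μ i) = m + ℓ := by
      intro i _
      have h2 := hm i; have h3 := hl i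
      rw [if_neg (by simp only [hμdef]; omega)]
      simp only [hμdef]; omega
    rw [numCols, Finset.sup_congr rfl h1, Finset.sup_const Finset.univ_nonempty]
  set c : K[X] →ₗ[K] (Fin (numCols d μ - 1 + 1) → K) :=
    LinearMap.pi fun j => lcoeff K (numCols d μ - 1 - (j : ℕ)) with hcdef
  have hM : ∀ i, genMat d F μ i = c ((rowsList F μ).get i) := by
    intro i; funext j; rw [hcdef]; rfl
  have hrange : Set.range (genMat d F μ) = c '' {x | x ∈ rowsList F μ} := by
    ext v
    constructor
    · rintro ⟨i, rfl⟩
      exact ⟨(rowsList F μ).get i, List.get_mem _ i, (hM i).symm⟩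
    · rintro ⟨P, hP, rfl⟩
      obtain ⟨i, hi⟩ := List.mem_iff_get.1 hP
      exact ⟨i, by rw [hM i, hi]⟩
  have hmem : F iℓ ∈ (List.finRange (n + 1)).map F :=
    List.mem_map.2 ⟨iℓ, List.mem_finRange _, rfl⟩
  have hG2eq : gcdFam F (Fin.last n) = ((List.finRange (n + 1)).map F).foldr pgcd 0 := by
    simp only [gcdFam, Fin.le_last, ite_true, List.foldr_map]
  have hGdvd : gcdFam F (Fin.last n) ∣ F iℓ := by
    rw [hG2eq]; exact foldr_pgcd_dvd_mem 0 _ _ hmem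
  have hGne : gcdFam F (Fin.last n) ≠ 0 :=
    fun h => hF0 iℓ (zero_dvd_iff.1 (h ▸ hGdvd))
  have hGdeg : (gcdFam F (Fin.last n)).natDegree ≤ ℓ := by
    have h5 := natDegree_le_of_dvd hGdvd (hF0 iℓ)
    rw [hnd iℓ, hiℓ] at h5; exact h5
  have hspan : Submodule.span K {x | x ∈ rowsList F μ} =
      divLT (gcdFam F (Fin.last n)) (m + ℓ) := by
    simp only [rowsList]
    rw [span_flatMap]
    have hfun : (fun (i : Fin (n + 1)) acc =>
        Submodule.span K {x | x ∈ shifts (F i) (μ i)} ⊔ acc) =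
        fun i acc => divLT (F i) (m + ℓ) ⊔ acc := by
      funext i acc
      have h1 : μ i + (F i).natDegree = m + ℓ := by
        rw [hnd i]; simp only [hμdef]; have := hm i; have := hl i; omega
      rw [span_shifts (hF0 i), h1]
    rw [hfun]
    have hstep : (List.finRange (n + 1)).foldr (fun i acc => divLT (F i) (m + ℓ) ⊔ acc) ⊥ =
        ((List.finRange (n + 1)).map F).foldr (fun B acc => divLT B (m + ℓ) ⊔ acc) ⊥ :=
      (List.foldr_map (f := F) (g := fun B acc => divLT B (m + ℓ) ⊔ acc) (l := List.finRange (n + 1)) (init := ⊥)).symm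
    rw [hstep]
    haveI : LeftCommutative (fun (B : K[X]) acc => divLT B (m + ℓ) ⊔ acc) := ⟨fun a b x => by
      simp only [← sup_assoc]; rw [sup_comm (divLT a (m + ℓ)) (divLT b (m + ℓ))]⟩
    rw [(List.perm_cons_erase hmem).foldr_eq ⊥, List.foldr_cons]
    have hLF : ∀ B ∈ (List.finRange (n + 1)).map F, B ≠ 0 ∧ B.natDegree ≤ m := by
      rintro B hB
      obtain ⟨i, -, rfl⟩ := List.mem_map.1 hB
      exact ⟨hF0 i, by rw [hnd i]; exact hm i⟩
    rw [sup_divLT_fold _ (F iℓ) (hF0 iℓ) (by rw [hnd iℓ, hiℓ])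
      (fun B hB => by
        obtain ⟨h1, h2⟩ := hLF B (List.mem_of_mem_erase hB)
        exact ⟨h1, by omega⟩)]
    have hG1all : ∀ B ∈ (List.finRange (n + 1)).map F,
        (((List.finRange (n + 1)).map F).erase (F iℓ)).foldr pgcd (F iℓ) ∣ B := by
      intro B hB
      by_cases hBA : B = F iℓ
      · subst hBA; exact foldr_pgcd_dvd_init _ _
      · exact foldr_pgcd_dvd_mem _ _ B ((List.mem_erase_of_ne hBA).2 hB)
    refine divLT_congr ?_ ?_ _
    · rw [hG2eq]
      exact dvd_foldr_pgcd (foldr_pgcd_dvd_mem 0 _ _ hmem)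
        (fun B hB => foldr_pgcd_dvd_mem 0 _ B (List.mem_of_mem_erase hB))
    · rw [hG2eq]
      exact dvd_foldr_pgcd (dvd_zero _) hG1all
  rw [Matrix.rank_eq_finrank_span_row, Matrix.row, hrange, Submodule.span_image, hspan]
  haveI h1 : FiniteDimensional K (degreeLT K (m + ℓ)) := degreeLT_finiteDimensional _
  haveI h2 : FiniteDimensional K (divLT (gcdFam F (Fin.last n)) (m + ℓ)) :=
    Submodule.finiteDimensional_of_le (divLT_le_degreeLT _ _)
  have hker : LinearMap.ker (c.domRestrict (divLT (gcdFam F (Fin.last n)) (m + ℓ))) = ⊥ := by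
    rw [LinearMap.ker_eq_bot']
    rintro ⟨P, hP⟩ h0
    rw [Submodule.mk_eq_zero]
    ext k
    simp only [coeff_zero]
    by_cases hk : k < m + ℓ
    · have h3 := congrFun h0 (⟨m + ℓ - 1 - k, by omega⟩ : Fin (numCols d μ - 1 + 1))
      simp only [hcdef, LinearMap.domRestrict_apply, LinearMap.pi_apply, lcoeff_apply,
        Pi.zero_apply] at h3
      have h4 : numCols d μ - 1 - (m + ℓ - 1 - k) = k := by omega
      rwa [h4] at h3
    · refine coeff_eq_zero_of_degree_lt (lt_of_lt_of_le (mem_divLT.1 hP).2 ?_)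
      have h7 : m + ℓ ≤ k := by omega
      exact_mod_cast h7
  have hfr : Module.finrank K
      (Submodule.map c (divLT (gcdFam F (Fin.last n)) (m + ℓ))) =
      Module.finrank K (divLT (gcdFam F (Fin.last n)) (m + ℓ)) := by
    rw [← LinearMap.range_domRestrict]
    have h6 := LinearMap.finrank_range_add_finrank_ker
      (c.domRestrict (divLT (gcdFam F (Fin.last n)) (m + ℓ)))
    rw [hker, finrank_bot] at h6
    omega
  rw [hfr, finrank_divLT hGne (by omega)]
end

section
/- Kakie rank-shift lemma: With N_k(F) = M_μ(F) where μ_i = m + ℓ − d_i − k (m = max d_i, ℓ = min d_i), for every integer k ≤ h = deg gcd(F₀,…,F_n), rank N_k(F) = rank N₀(F) − k. -/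
open Polynomial

section KakieAux

open Polynomial Submodule Module

variable {K : Type*} [Field K]

lemma pgcd_dvd_left' (a b : Polynomial K) : pgcd a b ∣ a :=
  @EuclideanDomain.gcd_dvd_left _ _ (Classical.decEq _) a b

lemma pgcd_dvd_right' (a b : Polynomial K) : pgcd a b ∣ b :=
  @EuclideanDomain.gcd_dvd_right _ _ (Classical.decEq _) a b

lemma pgcd_mem (a b : Polynomial K) (I : Ideal (Polynomial K)) (ha : a ∈ I) (hb : b ∈ I) :
    pgcd a b ∈ I := by
  have h2 : pgcd a b = a * @EuclideanDomain.gcdA _ _ (Classical.decEq _) a b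
      + b * @EuclideanDomain.gcdB _ _ (Classical.decEq _) a b :=
    @EuclideanDomain.gcd_eq_gcd_ab _ _ (Classical.decEq _) a b
  rw [h2]
  exact add_mem (I.mul_mem_right _ ha) (I.mul_mem_right _ hb)

lemma gcdFam_last_eq {n : ℕ} (F : Fin (n + 1) → Polynomial K) :
    gcdFam F (Fin.last n) = (List.finRange (n + 1)).foldr (fun j acc => pgcd (F j) acc) 0 := by
  unfold gcdFam
  congr 1
  funext j acc
  simp [Fin.le_last]

lemma foldr_pgcd_dvd {n : ℕ} (F : Fin (n + 1) → Polynomial K) (l : List (Fin (n + 1))) :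
    ∀ j ∈ l, (l.foldr (fun j acc => pgcd (F j) acc) 0) ∣ F j := by
  induction l with
  | nil => simp
  | cons x l ih =>
    intro j hj
    rcases List.mem_cons.1 hj with rfl | hj
    · exact pgcd_dvd_left' _ _
    · exact dvd_trans (pgcd_dvd_right' _ _) (ih j hj)

lemma foldr_pgcd_mem {n : ℕ} (F : Fin (n + 1) → Polynomial K) (l : List (Fin (n + 1))) :
    (l.foldr (fun j acc => pgcd (F j) acc) 0) ∈ Ideal.span (Set.range F) := by
  induction l with
  | nil => simp
  | cons x l ih =>
    exact pgcd_mem _ _ _ (Ideal.subset_span ⟨x, rfl⟩) ih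

lemma gcdFam_dvd {n : ℕ} (F : Fin (n + 1) → Polynomial K) (i : Fin (n + 1)) :
    gcdFam F (Fin.last n) ∣ F i := by
  rw [gcdFam_last_eq]
  exact foldr_pgcd_dvd F _ i (List.mem_finRange i)

lemma gcdFam_mem_span {n : ℕ} (F : Fin (n + 1) → Polynomial K) :
    gcdFam F (Fin.last n) ∈ Ideal.span (Set.range F) := by
  rw [gcdFam_last_eq]
  exact foldr_pgcd_mem F _

lemma mem_rowsList {n : ℕ} (F : Fin (n + 1) → Polynomial K) (μ : Fin (n + 1) → ℕ)
    (p : Polynomial K) :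
    p ∈ rowsList F μ ↔ ∃ i j, j < μ i ∧ p = X ^ j * F i := by
  simp only [rowsList, shifts, List.mem_flatMap, List.mem_map, List.mem_reverse,
    List.mem_range, List.mem_finRange, true_and]
  constructor
  · rintro ⟨i, j, hj, rfl⟩
    exact ⟨i, j, hj, rfl⟩
  · rintro ⟨i, j, hj, rfl⟩
    exact ⟨i, j, hj, rfl⟩

/-- Key degree-bounded representation lemma (Kakie). -/
lemma key_repr {n : ℕ} (d : Fin (n + 1) → ℕ) (F : Fin (n + 1) → Polynomial K)
    (hdeg : ∀ i, (F i).degree = (d i : ℕ)) (N t : ℕ) (j0 : Fin (n + 1))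
    (hj0 : ∀ i, d j0 ≤ d i)
    (hbig : ∀ i, d i + d j0 ≤ N + (gcdFam F (Fin.last n)).natDegree)
    (ht : t + (gcdFam F (Fin.last n)).natDegree < N) :
    ∃ B : Fin (n + 1) → Polynomial K,
      (∀ i, (B i).degree < ((N - d i : ℕ) : WithBot ℕ)) ∧
      ∑ i, B i * F i = X ^ t * gcdFam F (Fin.last n) := by
  classical
  set G := gcdFam F (Fin.last n) with hGdef
  set h := G.natDegree with hh
  have hF0 : ∀ i, F i ≠ 0 := by
    intro i hz
    have := hdeg i
    rw [hz, degree_zero] at this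
    exact absurd this (by simp)
  have hG0 : G ≠ 0 := by
    intro hz
    have := gcdFam_dvd F j0
    rw [← hGdef, hz, zero_dvd_iff] at this
    exact hF0 j0 this
  have hQ : ∀ i, ∃ q, F i = G * q := fun i => (gcdFam_dvd F i :)
  choose Q hQ using hQ
  have hQ0 : ∀ i, Q i ≠ 0 := by
    intro i hz
    exact hF0 i (by rw [hQ i, hz, mul_zero])
  have hndF : ∀ i, (F i).natDegree = d i := fun i => natDegree_eq_of_degree_eq_some (hdeg i)
  have hdQn : ∀ i, h + (Q i).natDegree = d i := by
    intro i
    have := natDegree_mul (p := G) (q := Q i) hG0 (hQ0 i)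
    rw [← hQ i, hndF i] at this
    omega
  have hhd : ∀ i, h ≤ d i := fun i => by have := hdQn i; omega
  have hdQ : ∀ i, (Q i).degree = ((d i - h : ℕ) : WithBot ℕ) := by
    intro i
    rw [degree_eq_natDegree (hQ0 i)]
    have := hdQn i
    congr 1
    omega
  -- the monic reducer
  set lc : K := (Q j0).leadingCoeff with hlc
  set Pm : Polynomial K := Q j0 * C lc⁻¹ with hPm
  have hPmMonic : Pm.Monic := monic_mul_leadingCoeff_inv (hQ0 j0)
  have hPmdeg : Pm.degree = ((d j0 - h : ℕ) : WithBot ℕ) := by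
    rw [hPm, hlc, degree_mul_leadingCoeff_inv _ (hQ0 j0), hdQ j0]
  -- a representation with no degree bounds
  have hmem : X ^ t * G ∈ Ideal.span (Set.range F) :=
    Ideal.mul_mem_left _ _ (hGdef ▸ gcdFam_mem_span F)
  obtain ⟨A, hA⟩ := (Ideal.mem_span_range_iff_exists_fun).1 hmem
  set c : Fin (n + 1) → Polynomial K :=
    fun i => (A i /ₘ Pm) * C lc⁻¹ * Q i with hc
  set B : Fin (n + 1) → Polynomial K :=
    fun i => if i = j0 then A j0 + ∑ i ∈ Finset.univ.erase j0, c i else A i %ₘ Pm with hB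
  -- the sum is preserved
  have hkey : ∀ i ∈ Finset.univ.erase j0, B i * F i = A i * F i - c i * F j0 := by
    intro i hi
    have hine : i ≠ j0 := (Finset.mem_erase.1 hi).1
    have hmod : A i %ₘ Pm = A i - Pm * (A i /ₘ Pm) :=
      eq_sub_of_add_eq (modByMonic_add_div (A i) Pm)
    have hBi : B i = A i - Pm * (A i /ₘ Pm) := by rw [hB]; simp only [if_neg hine]; exact hmod
    rw [hBi]
    simp only [hc]
    rw [hQ i, hQ j0, hPm]
    ring
  have hsum : ∑ i, B i * F i = ∑ i, A i * F i := by
    rw [← Finset.add_sum_erase _ (fun i => B i * F i) (Finset.mem_univ j0),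
      ← Finset.add_sum_erase _ (fun i => A i * F i) (Finset.mem_univ j0),
      Finset.sum_congr rfl hkey, Finset.sum_sub_distrib, ← Finset.sum_mul]
    have hBj0 : B j0 = A j0 + ∑ i ∈ Finset.univ.erase j0, c i := by rw [hB]; simp
    rw [hBj0]
    ring
  refine ⟨B, ?_, by rw [hsum, hA]⟩
  -- degree bounds
  have hboundne : ∀ i, i ≠ j0 → (B i).degree < ((N - d i : ℕ) : WithBot ℕ) := by
    intro i hine
    have hBi : B i = A i %ₘ Pm := by rw [hB]; simp only [if_neg hine]
    have h1 : (B i).degree < Pm.degree := hBi ▸ degree_modByMonic_lt (A i) hPmMonic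
    refine lt_of_lt_of_le h1 ?_
    rw [hPmdeg]
    have := hbig i
    have := hhd i
    have := hhd j0
    exact_mod_cast (show d j0 - h ≤ N - d i by omega)
  intro i
  by_cases hij : i = j0
  · subst hij
    by_cases hB0 : B i = 0
    · rw [hB0, degree_zero]
      exact WithBot.bot_lt_coe _
    -- bound degree of B j0 * F j0
    have hsub : B i * F i = X ^ t * G - ∑ j ∈ Finset.univ.erase i, B j * F j := by
      rw [← hsum] at hA
      rw [← hA, ← Finset.add_sum_erase _ (fun j => B j * F j) (Finset.mem_univ i)]
      ring
    have hdegsum : (∑ j ∈ Finset.univ.erase i, B j * F j).degree < (N : WithBot ℕ) := by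
      refine lt_of_le_of_lt (degree_sum_le _ _) ?_
      rw [Finset.sup_lt_iff (show (⊥ : WithBot ℕ) < (N : ℕ) by exact_mod_cast WithBot.bot_lt_coe N)]
      intro j hj
      have hjne : j ≠ i := (Finset.mem_erase.1 hj).1
      by_cases hBj : B j = 0
      · rw [hBj, zero_mul, degree_zero]
        exact WithBot.bot_lt_coe _
      have hbnd := hboundne j hjne
      have hdij : d j ≤ N := by
        have := hbig j; have := hhd i; omega
      rw [degree_eq_natDegree hBj] at hbnd
      have hblt : (B j).natDegree < N - d j := by exact_mod_cast hbnd
      rw [degree_mul, hdeg j, degree_eq_natDegree hBj, ← Nat.cast_add]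
      exact_mod_cast (show (B j).natDegree + d j < N by omega)
    have hXtG : (X ^ t * G).degree < (N : WithBot ℕ) := by
      rw [degree_mul, degree_X_pow, degree_eq_natDegree hG0, ← hh, ← Nat.cast_add]
      exact_mod_cast ht
    have hBF : (B i * F i).degree < (N : WithBot ℕ) :=
      hsub ▸ lt_of_le_of_lt (degree_sub_le _ _) (max_lt hXtG hdegsum)
    rw [degree_mul, hdeg i, degree_eq_natDegree hB0, ← Nat.cast_add] at hBF
    rw [degree_eq_natDegree hB0]
    have hlt : (B i).natDegree + d i < N := by exact_mod_cast hBF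
    exact_mod_cast (show (B i).natDegree < N - d i by omega)
  · exact hboundne i hij

lemma finrank_map_of_injOn {M M₂ : Type*} [AddCommGroup M] [Module K M]
    [AddCommGroup M₂] [Module K M₂] (f : M →ₗ[K] M₂) (p : Submodule K M)
    (hinj : ∀ x ∈ p, f x = 0 → x = 0) :
    finrank K (Submodule.map f p) = finrank K p := by
  have hinj' : Function.Injective (f.domRestrict p) := by
    intro x y hxy
    have : f ((x : M) - y) = 0 := by
      rw [map_sub]
      simpa [LinearMap.domRestrict_apply, sub_eq_zero] using hxy
    have := hinj _ (sub_mem x.2 y.2) this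
    exact Subtype.ext (by rwa [sub_eq_zero] at this)
  rw [← LinearMap.range_domRestrict]
  exact ((LinearEquiv.ofInjective _ hinj').finrank_eq).symm

lemma rank_cmList (L : List (Polynomial K)) (M : ℕ)
    (hL : ∀ p ∈ L, p.degree < ((M + 1 : ℕ) : WithBot ℕ)) :
    (cmList L M).rank = finrank K (span K {p : Polynomial K | p ∈ L}) := by
  classical
  set φ : Polynomial K →ₗ[K] (Fin (M + 1) → K) :=
    LinearMap.pi (fun j : Fin (M + 1) => lcoeff K (M - (j : ℕ))) with hφ
  have hrows : cmList L M = fun i => φ (L.get i) := rfl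
  have hrange : Set.range (cmList L M) = φ '' {p : Polynomial K | p ∈ L} := by
    rw [hrows]
    ext v
    simp only [Set.mem_range, Set.mem_image, Set.mem_setOf_eq, List.mem_iff_get]
    constructor
    · rintro ⟨i, rfl⟩; exact ⟨L.get i, ⟨i, rfl⟩, rfl⟩
    · rintro ⟨p, ⟨i, rfl⟩, rfl⟩; exact ⟨i, rfl⟩
  rw [Matrix.rank_eq_finrank_span_row]
  change finrank K (span K (Set.range (cmList L M))) = _
  rw [hrange, Submodule.span_image]
  apply finrank_map_of_injOn
  intro x hx hφx
  have hxdeg : x ∈ degreeLT K (M + 1) := by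
    have : span K {p : Polynomial K | p ∈ L} ≤ degreeLT K (M + 1) :=
      Submodule.span_le.2 fun p hp => Polynomial.mem_degreeLT.2 (hL p hp)
    exact this hx
  rw [Polynomial.mem_degreeLT] at hxdeg
  ext c
  by_cases hc : c ≤ M
  · have := congrFun hφx ⟨M - c, by omega⟩
    simpa [hφ, LinearMap.pi_apply, lcoeff_apply, Nat.sub_sub_self hc] using this
  · simp only [coeff_zero]
    exact Polynomial.coeff_eq_zero_of_degree_lt
      (lt_of_lt_of_le hxdeg (by exact_mod_cast (by omega : M + 1 ≤ c)))

lemma rank_genMat {n : ℕ} (d : Fin (n + 1) → ℕ) (F : Fin (n + 1) → Polynomial K)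
    (hdeg : ∀ i, (F i).degree = (d i : ℕ)) (N : ℕ) (j0 : Fin (n + 1))
    (hj0 : ∀ i, d j0 ≤ d i)
    (hbig : ∀ i, d i + d j0 ≤ N + (gcdFam F (Fin.last n)).natDegree) :
    (genMat d F fun i => N - d i).rank = N - (gcdFam F (Fin.last n)).natDegree := by
  classical
  set G := gcdFam F (Fin.last n) with hGdef
  set h := G.natDegree with hh
  set μ : Fin (n + 1) → ℕ := fun i => N - d i with hμ
  have hF0 : ∀ i, F i ≠ 0 := by
    intro i hz
    have := hdeg i
    rw [hz, degree_zero] at this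
    exact absurd this (by simp)
  have hG0 : G ≠ 0 := by
    intro hz
    have := gcdFam_dvd F j0
    rw [← hGdef, hz, zero_dvd_iff] at this
    exact hF0 j0 this
  have hQ : ∀ i, ∃ q, F i = G * q := fun i => gcdFam_dvd F i
  choose Q hQ using hQ
  have hQ0 : ∀ i, Q i ≠ 0 := fun i hz => hF0 i (by rw [hQ i, hz, mul_zero])
  have hndF : ∀ i, (F i).natDegree = d i := fun i => natDegree_eq_of_degree_eq_some (hdeg i)
  have hdQn : ∀ i, h + (Q i).natDegree = d i := by
    intro i
    have := natDegree_mul (p := G) (q := Q i) hG0 (hQ0 i)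
    rw [← hQ i, hndF i] at this
    omega
  have hhd : ∀ i, h ≤ d i := fun i => by have := hdQn i; omega
  have hdN : ∀ i, d i ≤ N := fun i => by have := hbig i; have := hhd j0; omega
  have hhN : h ≤ N := le_trans (hhd j0) (hdN j0)
  -- rewrite rank as finrank of the span of the rows
  have hL : ∀ p ∈ rowsList F μ,
      p.degree < ((numCols d μ - 1 + 1 : ℕ) : WithBot ℕ) := by
    intro p hp
    obtain ⟨i, j, hjlt, rfl⟩ := (mem_rowsList F μ p).1 hp
    have hμi : μ i ≠ 0 := by omega
    have hle : (if μ i = 0 then 0 else d i + μ i) ≤ numCols d μ :=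
      Finset.le_sup (f := fun i => if μ i = 0 then 0 else d i + μ i) (Finset.mem_univ i)
    rw [if_neg hμi] at hle
    rw [degree_mul, degree_X_pow, hdeg i, ← Nat.cast_add]
    exact_mod_cast (show j + d i < numCols d μ - 1 + 1 by omega)
  have hrk := rank_cmList (K := K) (rowsList F μ) (numCols d μ - 1) hL
  have hgen : genMat d F μ = cmList (rowsList F μ) (numCols d μ - 1) := rfl
  rw [hgen, hrk]
  -- identify the span
  have hspan : span K {p : Polynomial K | p ∈ rowsList F μ} =
      Submodule.map (LinearMap.mulLeft K G) (degreeLT K (N - h)) := by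
    apply le_antisymm
    · rw [Submodule.span_le]
      rintro p hp
      obtain ⟨i, j, hjlt, rfl⟩ := (mem_rowsList F μ p).1 (by exact hp)
      refine ⟨X ^ j * Q i, ?_, ?_⟩
      · rw [SetLike.mem_coe, Polynomial.mem_degreeLT, degree_mul, degree_X_pow,
          degree_eq_natDegree (hQ0 i), ← Nat.cast_add]
        have h1 := hdQn i
        have h2 := hdN i
        have h3 : j < N - d i := by simpa [hμ] using hjlt
        exact_mod_cast (show j + (Q i).natDegree < N - h by omega)
      · rw [LinearMap.mulLeft_apply, hQ i]
        ring
    · rintro _ ⟨q, hq, rfl⟩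
      rw [SetLike.mem_coe, Polynomial.mem_degreeLT] at hq
      rw [LinearMap.mulLeft_apply]
      -- first: each `X ^ t * G` with `t < N - h` lies in the span
      have hXtG : ∀ t, t < N - h →
          X ^ t * G ∈ span K {p : Polynomial K | p ∈ rowsList F μ} := by
        intro t htlt
        obtain ⟨B, hBdeg, hBsum⟩ := key_repr d F hdeg N t j0 hj0 hbig (by rw [← hGdef, ← hh]; omega)
        rw [← hGdef] at hBsum
        rw [← hBsum]
        refine Submodule.sum_mem _ fun i _ => ?_
        have hexp : B i * F i =
            ∑ j ∈ Finset.range (N - d i), (B i).coeff j • (X ^ j * F i) := by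
          by_cases hB0 : B i = 0
          · simp [hB0]
          · have hnd : (B i).natDegree < N - d i :=
              (natDegree_lt_iff_degree_lt hB0).2 (hBdeg i)
            conv_lhs => rw [Polynomial.as_sum_range' (B i) (N - d i) hnd]
            rw [Finset.sum_mul]
            refine Finset.sum_congr rfl fun j _ => ?_
            rw [← smul_X_eq_monomial, smul_mul_assoc]
        rw [hexp]
        refine Submodule.sum_mem _ fun j hj => ?_
        refine Submodule.smul_mem _ _ (Submodule.subset_span ?_)
        rw [Set.mem_setOf_eq, mem_rowsList]
        exact ⟨i, j, by simpa [hμ] using Finset.mem_range.1 hj, rfl⟩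
      by_cases hq0 : q = 0
      · simp [hq0]
      have hnd : q.natDegree < N - h := (natDegree_lt_iff_degree_lt hq0).2 hq
      rw [Polynomial.as_sum_range' q (N - h) hnd, Finset.mul_sum]
      refine Submodule.sum_mem _ fun t ht => ?_
      rw [← smul_X_eq_monomial, mul_smul_comm, mul_comm]
      exact Submodule.smul_mem _ _ (hXtG t (Finset.mem_range.1 ht))
  rw [hspan, finrank_map_of_injOn]
  · rw [(Polynomial.degreeLTEquiv K (N - h)).finrank_eq, Module.finrank_fin_fun]
  · intro x _ hx
    rw [LinearMap.mulLeft_apply] at hx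
    exact (mul_eq_zero.1 hx).resolve_left hG0

end KakieAux

/-- Kakie rank-shift lemma: with `N_k(F) = M_μ(F)` where
`μ_i = m + ℓ - d_i - k` (`m = max dᵢ`, `ℓ = min dᵢ`), for every integer
`k ≤ h = deg gcd(F₀,…,F_n)` one has `rank N_k(F) = rank N₀(F) - k`. -/
theorem kakie_rank_shift {K : Type*} [Field K] {n : ℕ} (d : Fin (n + 1) → ℕ)
    (F : Fin (n + 1) → Polynomial K) (hdeg : ∀ i, (F i).degree = (d i : ℕ))
    (hpos : ∀ i, 0 < d i) (m ℓ : ℕ)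
    (hm : ∀ i, d i ≤ m) (hm' : ∃ i, d i = m) (hl : ∀ i, ℓ ≤ d i) (hl' : ∃ i, d i = ℓ)
    (k : ℤ) (hk : k ≤ ((gcdFam F (Fin.last n)).natDegree : ℤ)) :
    ((genMat d F fun i => ((m : ℤ) + ℓ - d i - k).toNat).rank : ℤ) =
      ((genMat d F fun i => m + ℓ - d i).rank : ℤ) - k := by
  classical
  set G := gcdFam F (Fin.last n) with hGdef
  set h := G.natDegree with hh
  have hF0 : ∀ i, F i ≠ 0 := by
    intro i hz
    have := hdeg i
    rw [hz, degree_zero] at this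
    exact absurd this (by simp)
  have hhd : ∀ i, h ≤ d i := fun i =>
    Polynomial.natDegree_le_of_dvd (hGdef ▸ gcdFam_dvd F i) (hF0 i) |>.trans
      (le_of_eq (natDegree_eq_of_degree_eq_some (hdeg i)))
  obtain ⟨il, hil⟩ := hl'
  have hhl : h ≤ ℓ := hil ▸ hhd il
  have hj0 : ∀ i, d il ≤ d i := fun i => hil ▸ hl i
  have hN1 : (fun i => ((m : ℤ) + ℓ - d i - k).toNat) =
      fun i => ((m : ℤ) + ℓ - k).toNat - d i := by
    funext i
    have h1 := hm i
    have h2 := hl i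
    omega
  rw [hN1]
  rw [rank_genMat d F hdeg (((m : ℤ) + ℓ - k).toNat) il hj0 (by
    intro i
    have h1 := hm i
    have h2 := hl i
    rw [hil, ← hGdef, ← hh]
    omega)]
  rw [show (fun i => m + ℓ - d i) = fun i => (m + ℓ) - d i from rfl]
  rw [rank_genMat d F hdeg (m + ℓ) il hj0 (by
    intro i
    have h1 := hm i
    rw [hil, ← hGdef, ← hh]
    omega)]
  rw [← hGdef, ← hh]
  have h1 := hm il
  omega
end
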